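/- Lemma 2.1 (minimizer form): if g is convex, R = Pᵀ, and x_* is a global minimizer of ψ over ℝ^N, then the direction d = P(x_* − x_k) satisfies ⟨∇f(y_k), d⟩ ≤ ψ(x_*) − ψ(x_k) ≤ 0. -/

import Mathlib

open scoped RealInnerProductSpace

theorem ConvexOn.apply_sub_le_of_hasFDerivAt {E : Type*} [NormedAddCommGroup E] [NormedSpace ℝ E]
    {s : Set E} {g : E → ℝ} {g' : E →L[ℝ] ℝ} {x y : E}
    (hg : ConvexOn ℝ s g) (hx : x ∈ s) (hy : y ∈ s) (hg' : HasFDerivAt g g' x) :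
    g' (y - x) ≤ g y - g x := by
  let ℓ : ℝ →ᵃ[ℝ] E := AffineMap.lineMap x y
  have hline : HasDerivAt ℓ (y - x) 0 := by
    simpa [ℓ] using AffineMap.hasDerivAt_lineMap (a := x) (b := y) (x := (0 : ℝ))
  have hderiv : HasDerivAt (g ∘ ℓ) (g' (y - x)) 0 := by
    refine HasFDerivAt.comp_hasDerivAt (0 : ℝ) ?_ hline
    simpa [ℓ] using hg'
  have hconv : ConvexOn ℝ (ℓ ⁻¹' s) (g ∘ ℓ) := hg.comp_affineMap ℓ
  have h0 : (0 : ℝ) ∈ ℓ ⁻¹' s := by simpa [ℓ] using hx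
  have h1 : (1 : ℝ) ∈ ℓ ⁻¹' s := by simpa [ℓ] using hy
  simpa [slope_def_field, ℓ] using hconv.le_slope_of_hasDerivAt h0 h1 zero_lt_one hderiv

theorem ConvexOn.inner_gradient_sub_le {E : Type*} [NormedAddCommGroup E]
    [InnerProductSpace ℝ E] [CompleteSpace E] {s : Set E} {g : E → ℝ} {x y : E}
    (hg : ConvexOn ℝ s g) (hx : x ∈ s) (hy : y ∈ s) (hgx : DifferentiableAt ℝ g x) :
    ⟪gradient g x, y - x⟫ ≤ g y - g x := by
  simpa [InnerProductSpace.toDual_apply_apply] using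
    hg.apply_sub_le_of_hasFDerivAt hx hy hgx.hasGradientAt.hasFDerivAt

theorem coarse_correction_descent_minimizer_general
    (n N : ℕ)
    (f : EuclideanSpace ℝ (Fin n) → ℝ) (g : EuclideanSpace ℝ (Fin N) → ℝ)
    (hg : Differentiable ℝ g)
    (hgconv : ConvexOn ℝ Set.univ g)
    (P : EuclideanSpace ℝ (Fin N) →L[ℝ] EuclideanSpace ℝ (Fin n))
    (R : EuclideanSpace ℝ (Fin n) →L[ℝ] EuclideanSpace ℝ (Fin N))
    (hR : R = ContinuousLinearMap.adjoint P)
    (yk : EuclideanSpace ℝ (Fin n))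
    (xk : EuclideanSpace ℝ (Fin N))
    (v : EuclideanSpace ℝ (Fin N)) (hv : v = R (gradient f yk) - gradient g xk)
    (ψ : EuclideanSpace ℝ (Fin N) → ℝ)
    (hψ : ∀ x, ψ x = g x + ⟪v, x - xk⟫)
    (xstar : EuclideanSpace ℝ (Fin N)) (hxstar : ∀ x, ψ xstar ≤ ψ x)
    (d : EuclideanSpace ℝ (Fin n)) (hd : d = P (xstar - xk)) :
    ⟪gradient f yk, d⟫ ≤ ψ xstar - ψ xk ∧ ψ xstar - ψ xk ≤ 0 := by
  have hfirstOrder : ⟪gradient g xk, xstar - xk⟫ ≤ g xstar - g xk :=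
    hgconv.inner_gradient_sub_le (Set.mem_univ _) (Set.mem_univ _) (hg xk)
  have hadjoint : ⟪R (gradient f yk), xstar - xk⟫ = ⟪gradient f yk, d⟫ := by
    rw [hR, hd, ContinuousLinearMap.adjoint_inner_left]
  have hdecrease : ψ xstar - ψ xk = g xstar - g xk + ⟪v, xstar - xk⟫ := by
    simp only [hψ, sub_self, inner_zero_right]
    ring
  refine ⟨?_, sub_nonpos.mpr (hxstar xk)⟩
  rw [hdecrease, hv, inner_sub_left, hadjoint]
  linarith

/-- Lemma 2.1 (minimizer form): if `g` is convex, `R = Pᵀ`, and `x_*` is a global minimizer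
of `ψ`, then the direction `d = P(x_* − x_k)` satisfies
`⟪∇f(y_k), d⟫ ≤ ψ(x_*) − ψ(x_k) ≤ 0`. -/
theorem coarse_correction_descent_minimizer
    (n N : ℕ) (hn : 0 < n) (hN : 0 < N)
    (f : EuclideanSpace ℝ (Fin n) → ℝ) (g : EuclideanSpace ℝ (Fin N) → ℝ)
    (hf : Differentiable ℝ f) (hg : Differentiable ℝ g)
    (hgconv : ConvexOn ℝ Set.univ g)
    (P : EuclideanSpace ℝ (Fin N) →L[ℝ] EuclideanSpace ℝ (Fin n))
    (R : EuclideanSpace ℝ (Fin n) →L[ℝ] EuclideanSpace ℝ (Fin N))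
    (hR : R = ContinuousLinearMap.adjoint P)
    (yk : EuclideanSpace ℝ (Fin n))
    (xk : EuclideanSpace ℝ (Fin N)) (hxk : xk = R yk)
    (v : EuclideanSpace ℝ (Fin N)) (hv : v = R (gradient f yk) - gradient g xk)
    (ψ : EuclideanSpace ℝ (Fin N) → ℝ)
    (hψ : ∀ x, ψ x = g x + ⟪v, x - xk⟫)
    (xstar : EuclideanSpace ℝ (Fin N)) (hxstar : ∀ x, ψ xstar ≤ ψ x)
    (d : EuclideanSpace ℝ (Fin n)) (hd : d = P (xstar - xk)) :
    ⟪gradient f yk, d⟫ ≤ ψ xstar - ψ xk ∧ ψ xstar - ψ xk ≤ 0 :=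
  coarse_correction_descent_minimizer_general n N f g hg hgconv P R hR yk xk v hv ψ hψ xstar hxstar
    d hd
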